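/- For every integer m ≥ 1 one has the double inequality ((2+m)/m)·((4+3m)/(2+2m))^{m/(2+m)} − (2+m)/m ≥ 1/2 ≥ (m/(2+m))·((2+3m)/(2+2m))^{(2+m)/m} − m/(2+m). -/

import Mathlib

/-!
Both inequalities follow from the lower bound `z ^ p ≥ z / ((1 - p) z + p)` for `0 ≤ p ≤ 1`,
which is Bernoulli's inequality `z ^ (1 - p) ≤ 1 + (1 - p)(z - 1)` divided into `z`.
With `p = m / (2 + m)` it gives `x ^ p ≥ (4 + 3m) / (4 + 2m)` for `x = (4 + 3m) / (2 + 2m)`,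
and `((2 + 3m) / (2m)) ^ p ≥ (2 + 3m) / (2 + 2m)`, which is the second inequality after raising
both sides to the power `1 / p = (2 + m) / m`.
-/

open Real

lemma div_one_sub_mul_add_le_rpow {p z : ℝ} (hp0 : 0 ≤ p) (hp1 : p ≤ 1) (hz : 0 < z) :
    z / ((1 - p) * z + p) ≤ z ^ p := by
  have bernoulli : z ^ (1 - p) ≤ (1 - p) * z + p := by
    have h := rpow_one_add_le_one_add_mul_self (by linarith : -1 ≤ z - 1)
      (by linarith : 0 ≤ 1 - p) (by linarith : 1 - p ≤ 1)
    convert h using 1 <;> ring_nf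
  have hden : 0 < (1 - p) * z + p := (rpow_pos_of_pos hz _).trans_le bernoulli
  rw [div_le_iff₀ hden]
  calc z = z ^ p * z ^ (1 - p) := by rw [← rpow_add hz, add_sub_cancel, rpow_one]
    _ ≤ z ^ p * ((1 - p) * z + p) := by gcongr

lemma half_le_mul_rpow_sub {m : ℝ} (hm : 0 < m) :
    1 / 2 ≤ (2 + m) / m * ((4 + 3 * m) / (2 + 2 * m)) ^ (m / (2 + m)) - (2 + m) / m := by
  have h₁ : 2 + m ≠ 0 := by positivity
  have h₂ : 2 + 2 * m ≠ 0 := by positivity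
  have hp1 : m / (2 + m) ≤ 1 := (div_le_one (by positivity)).2 (by linarith)
  have hlower := div_one_sub_mul_add_le_rpow (by positivity) hp1
    (by positivity : 0 < (4 + 3 * m) / (2 + 2 * m))
  have hden : (1 - m / (2 + m)) * ((4 + 3 * m) / (2 + 2 * m)) + m / (2 + m)
      = (4 + 2 * m) / (2 + 2 * m) := by
    field_simp; ring
  rw [hden, div_div_div_cancel_right₀ h₂] at hlower
  calc 1 / 2 = (2 + m) / m * ((4 + 3 * m) / (4 + 2 * m)) - (2 + m) / m := by
        field_simp; ring
    _ ≤ _ := by gcongr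

lemma mul_rpow_sub_le_half {m : ℝ} (hm : 0 < m) :
    m / (2 + m) * ((2 + 3 * m) / (2 + 2 * m)) ^ ((2 + m) / m) - m / (2 + m) ≤ 1 / 2 := by
  set z := (2 + 3 * m) / (2 * m) with hz
  have h₁ : 2 + m ≠ 0 := by positivity
  have hp1 : m / (2 + m) ≤ 1 := (div_le_one (by positivity)).2 (by linarith)
  have hlower := div_one_sub_mul_add_le_rpow (by positivity) hp1 (by positivity : 0 < z)
  have hden : (1 - m / (2 + m)) * z + m / (2 + m) = (2 + 2 * m) / (2 * m) := by
    simp only [z]; field_simp; ring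
  rw [hden, hz, div_div_div_cancel_right₀ (by positivity)] at hlower
  have hupper : ((2 + 3 * m) / (2 + 2 * m)) ^ ((2 + m) / m) ≤ z := by
    calc ((2 + 3 * m) / (2 + 2 * m)) ^ ((2 + m) / m)
        ≤ (z ^ (m / (2 + m))) ^ ((2 + m) / m) := by gcongr
      _ = z := by
        rw [← rpow_mul (by positivity), div_mul_div_cancel₀' hm.ne', div_self h₁, rpow_one]
  calc _ ≤ m / (2 + m) * z - m / (2 + m) := by gcongr
    _ = 1 / 2 := by simp only [z]; field_simp; ring

theorem stmt_16 (m : ℕ) (hm : 1 ≤ m) :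
    ((2 + (m : ℝ)) / (m : ℝ)) *
        ((4 + 3 * (m : ℝ)) / (2 + 2 * (m : ℝ))) ^ ((m : ℝ) / (2 + (m : ℝ)))
        - (2 + (m : ℝ)) / (m : ℝ) ≥ 1 / 2 ∧
    (1 : ℝ) / 2 ≥ ((m : ℝ) / (2 + (m : ℝ))) *
        ((2 + 3 * (m : ℝ)) / (2 + 2 * (m : ℝ))) ^ ((2 + (m : ℝ)) / (m : ℝ))
        - (m : ℝ) / (2 + (m : ℝ)) := by
  have hm' : (0 : ℝ) < m := by exact_mod_cast hm
  exact ⟨half_le_mul_rpow_sub hm', mul_rpow_sub_le_half hm'⟩
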